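/- arXiv:2001.04067 — 2 statements merged into one kernel-verified Lean document; each statement's English description precedes it below -/
import Mathlib

section
/- Let f be a strictly convex decreasing function on ℝ, and let A, B be sequences of n reals with A weakly majorizing B. If f(a_1)+⋯+f(a_n) = f(b_1)+⋯+f(b_n), then the nondecreasing rearrangements of A and B coincide. -/
/-- The sum of the `k` smallest elements of a multiset of reals. -/
noncomputable def kSmallestSum (M : Multiset ℝ) (k : ℕ) : ℝ := ((M.sort (· ≤ ·)).take k).sum

/-- `A` weakly majorizes `B` (from below): for every `k`, the sum of the `k`
smallest entries of `A` is at least that of `B`. -/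
def WeakMaj (A B : Multiset ℝ) : Prop := ∀ k : ℕ, kSmallestSum B k ≤ kSmallestSum A k

/-- The multiset of values of a finite sequence. -/
def seqMultiset {n : ℕ} (a : Fin n → ℝ) : Multiset ℝ := Finset.univ.val.map a

/-- The multiset of pairwise `ρ`-values of an `m`-point configuration. -/
def pairMultiset {S : Type*} {m : ℕ} (ρ : S → S → ℝ) (X : Fin m → S) : Multiset ℝ :=
  ((Finset.univ.filter (fun q : Fin m × Fin m => q.1 < q.2)).val).map
    (fun q => ρ (X q.1) (X q.2))

/-!
Sort both sequences increasingly and write `f (y i) - f (x i) = c i * (y i - x i)`, where `c i` is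
the slope of the chord of `f` between `x i` and `y i`. Convexity makes `c` nondecreasing and
the decrease of `f` makes it negative, so Abel summation writes `∑ c i * (y i - x i)` as a
combination of the partial sums `∑_{i<k} (y i - x i) ≤ 0` with nonpositive coefficients: this is
the weak Karamata inequality. If the sorted sequences differ, let `p` be the first index where they
do and `q + 1` the first return of the partial sums to `0` after it. Then `y p < x p ≤ x q < y q`,
so strict convexity gives `c p < c q`, and some partial sum that is strictly negative gets a
strictly negative coefficient.
-/

open Finset

section ChordSlope

variable {f : ℝ → ℝ}

/-- On the diagonal the chord slope is the right derivative: this keeps it monotone in both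
arguments when `f` is convex. -/
noncomputable def chordSlope (f : ℝ → ℝ) (u v : ℝ) : ℝ :=
  if u = v then derivWithin f (Set.Ioi u) u else slope f u v

lemma chordSlope_comm (f : ℝ → ℝ) (u v : ℝ) : chordSlope f u v = chordSlope f v u := by
  unfold chordSlope
  split_ifs with h h' h'
  · rw [h]
  · exact absurd h.symm h'
  · exact absurd h'.symm h
  · exact slope_comm f u v

lemma chordSlope_eq_min_max (f : ℝ → ℝ) (u v : ℝ) :
    chordSlope f u v = chordSlope f (min u v) (max u v) := by
  rcases le_total u v with h | h
  · rw [min_eq_left h, max_eq_right h]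
  · rw [min_eq_right h, max_eq_left h, chordSlope_comm]

lemma chordSlope_mul_sub (f : ℝ → ℝ) (u v : ℝ) : chordSlope f u v * (v - u) = f v - f u := by
  unfold chordSlope
  split_ifs with h
  · simp [h]
  · rw [mul_comm]; exact sub_smul_slope f u v

lemma ConvexOn.chordSlope_mono_of_le (hf : ConvexOn ℝ Set.univ f) {a b a' b' : ℝ}
    (hab : a ≤ b) (ha'b' : a' ≤ b') (ha : a ≤ a') (hb : b ≤ b') :
    chordSlope f a b ≤ chordSlope f a' b' := by
  have rightDeriv_mono {u v : ℝ} (h : u ≤ v) :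
      derivWithin f (Set.Ioi u) u ≤ derivWithin f (Set.Ioi v) v :=
    hf.monotoneOn_rightDeriv (by simp) (by simp) h
  have slope_le_rightDeriv {u v : ℝ} (h : u < v) : slope f u v ≤ derivWithin f (Set.Ioi v) v :=
    (hf.slope_le_leftDeriv_of_mem_interior (Set.mem_univ u) (by simp) h).trans
      (hf.leftDeriv_le_rightDeriv_of_mem_interior (by simp))
  have rightDeriv_le_slope {u v : ℝ} (h : u < v) : derivWithin f (Set.Ioi u) u ≤ slope f u v :=
    hf.rightDeriv_le_slope_of_mem_interior (by simp) (Set.mem_univ v) h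
  unfold chordSlope
  rcases hab.eq_or_lt with rfl | hab <;> rcases ha'b'.eq_or_lt with rfl | ha'b'
  · simpa using rightDeriv_mono ha
  · simpa [ha'b'.ne] using (rightDeriv_mono ha).trans (rightDeriv_le_slope ha'b')
  · simpa [hab.ne] using (slope_le_rightDeriv hab).trans (rightDeriv_mono hb)
  · simp only [hab.ne, ha'b'.ne, if_false]
    calc slope f a b ≤ slope f a b' :=
          hf.slope_mono (Set.mem_univ a) ⟨Set.mem_univ b, hab.ne'⟩
            ⟨Set.mem_univ b', (hab.trans_le hb).ne'⟩ hb
      _ = slope f b' a := slope_comm f a b'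
      _ ≤ slope f b' a' :=
          hf.slope_mono (Set.mem_univ b') ⟨Set.mem_univ a, (hab.trans_le hb).ne⟩
            ⟨Set.mem_univ a', ha'b'.ne⟩ ha
      _ = slope f a' b' := slope_comm f b' a'

lemma ConvexOn.chordSlope_mono (hf : ConvexOn ℝ Set.univ f) {u v u' v' : ℝ} (hu : u ≤ u')
    (hv : v ≤ v') : chordSlope f u v ≤ chordSlope f u' v' := by
  rw [chordSlope_eq_min_max f u v, chordSlope_eq_min_max f u' v']
  exact hf.chordSlope_mono_of_le min_le_max min_le_max (min_le_min hu hv) (max_le_max hu hv)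

lemma StrictConvexOn.chordSlope_lt (hf : StrictConvexOn ℝ Set.univ f) {u v u' v' : ℝ}
    (hvu : v < u) (hu : u ≤ u') (hu' : u' < v') : chordSlope f u v < chordSlope f u' v' := by
  rw [chordSlope_comm f u v]
  unfold chordSlope
  simp only [hvu.ne, hu'.ne, if_false]
  calc slope f v u < derivWithin f (Set.Iio u) u :=
        hf.slope_lt_leftDeriv (Set.mem_univ v) (Set.mem_univ u) hvu
          (hf.convexOn.differentiableWithinAt_Iio_of_mem_interior (by simp))
    _ ≤ derivWithin f (Set.Ioi u) u := hf.convexOn.leftDeriv_le_rightDeriv_of_mem_interior (by simp)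
    _ ≤ derivWithin f (Set.Ioi u') u' := hf.convexOn.monotoneOn_rightDeriv (by simp) (by simp) hu
    _ ≤ slope f u' v' :=
        hf.convexOn.rightDeriv_le_slope_of_mem_interior (by simp) (Set.mem_univ v') hu'

lemma ConvexOn.chordSlope_neg (hf : ConvexOn ℝ Set.univ f) (hanti : StrictAnti f) (u v : ℝ) :
    chordSlope f u v < 0 := by
  have slope_neg {a b : ℝ} (h : a ≠ b) : slope f a b < 0 :=
    (hanti.strictAntiOn Set.univ).slope_neg (Set.mem_univ a) (Set.mem_univ b) h
  unfold chordSlope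
  split_ifs with h
  · exact (hf.rightDeriv_le_slope_of_mem_interior (by simp) (Set.mem_univ _)
      (lt_add_one u)).trans_lt (slope_neg (lt_add_one u).ne)
  · exact slope_neg h

lemma StrictConvexOn.strictAnti_of_antitone (hf : StrictConvexOn ℝ Set.univ f)
    (hanti : Antitone f) : StrictAnti f := by
  intro a b hab
  have hmid := hf.2 (Set.mem_univ a) (Set.mem_univ b) hab.ne one_half_pos one_half_pos
    (add_halves 1)
  have hmid_le_b : (1 / 2 : ℝ) • a + (1 / 2 : ℝ) • b ≤ b := by
    simp only [smul_eq_mul]; linarith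
  have := hanti hmid_le_b
  simp only [smul_eq_mul] at hmid this
  linarith

end ChordSlope

section PartialSums

variable {t c : ℕ → ℝ} {n : ℕ}

lemma exists_neg_pos_of_partialSums_nonpos (hT : ∀ k ≤ n, ∑ i ∈ range k, t i ≤ 0)
    (hTn : ∑ i ∈ range n, t i = 0) (hne : ∃ i < n, t i ≠ 0) :
    ∃ p q, p < q ∧ q < n ∧ t p < 0 ∧ 0 < t q ∧ ∀ k, p < k → k ≤ q → ∑ i ∈ range k, t i < 0 := by
  classical
  let p := Nat.find hne
  have hpn : p < n := (Nat.find_spec hne).1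
  have hTp : ∑ i ∈ range (p + 1), t i = t p := by
    rw [sum_range_succ, sum_eq_zero fun i hi ↦ ?_, zero_add]
    by_contra h
    exact Nat.find_min hne (mem_range.1 hi) ⟨(mem_range.1 hi).trans hpn, h⟩
  have htp : t p < 0 :=
    lt_of_le_of_ne (hTp ▸ hT (p + 1) hpn) (Nat.find_spec hne).2
  have hret : ∃ k, p < k ∧ ∑ i ∈ range k, t i = 0 := ⟨n, hpn, hTn⟩
  let r := Nat.find hret
  have hrn : r ≤ n := Nat.find_min' hret ⟨hpn, hTn⟩
  have hneg : ∀ k, p < k → k < r → ∑ i ∈ range k, t i < 0 := fun k hpk hkr ↦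
    lt_of_le_of_ne (hT k (hkr.le.trans hrn)) fun h ↦ Nat.find_min hret hkr ⟨hpk, h⟩
  have hr : p < r ∧ ∑ i ∈ range r, t i = 0 := Nat.find_spec hret
  have hpr : p + 1 < r := by
    refine lt_of_le_of_ne hr.1 fun h ↦ htp.ne ?_
    rw [← hTp, h, hr.2]
  refine ⟨p, r - 1, by omega, by omega, htp, ?_, fun k hpk hkq ↦ hneg k hpk (by omega)⟩
  have hsplit := sum_range_succ t (r - 1)
  rw [Nat.sub_add_cancel (by omega), hr.2] at hsplit
  linarith [hneg (r - 1) (by omega) (by omega)]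

lemma exists_mem_Ico_lt_succ_of_lt {p q : ℕ} (hpq : p ≤ q) (hc : c p < c q) :
    ∃ i ∈ Ico p q, c i < c (i + 1) := by
  have htel : ∑ i ∈ Ico p q, (c (i + 1) - c i) = c q - c p := by
    rw [sum_Ico_eq_sub _ hpq, sum_range_sub, sum_range_sub]; ring
  obtain ⟨i, hi, h⟩ := exists_lt_of_sum_lt (f := fun _ ↦ (0 : ℝ))
    (by rw [htel, sum_const_zero]; linarith)
  exact ⟨i, hi, by linarith⟩

lemma sum_range_mul_pos_of_partialSums_nonpos (hc : MonotoneOn c (Set.Iio n))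
    (hneg : ∀ i < n, c i < 0) (hT : ∀ k ≤ n, ∑ i ∈ range k, t i ≤ 0)
    (hstrict : ∀ p q, p < q → q < n → t p < 0 → 0 < t q → c p < c q)
    (hne : ∃ i < n, t i ≠ 0) : 0 < ∑ i ∈ range n, c i * t i := by
  have hn : 0 < n := by obtain ⟨i, hi, -⟩ := hne; omega
  have hparts := sum_range_by_parts c t n
  simp only [smul_eq_mul] at hparts
  rw [hparts]
  set T : ℕ → ℝ := fun k ↦ ∑ i ∈ range k, t i
  have hterm : ∀ i ∈ range (n - 1), (c (i + 1) - c i) * T (i + 1) ≤ 0 := fun i hi ↦ by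
    have hi := mem_range.1 hi
    exact mul_nonpos_of_nonneg_of_nonpos
      (sub_nonneg.2 (hc (by simp; omega) (by simp; omega) (by omega))) (hT _ (by omega))
  rcases (hT n le_rfl).lt_or_eq with hTn | hTn
  · have := sum_nonpos hterm
    nlinarith [hneg (n - 1) (by omega)]
  obtain ⟨p, q, hpq, hqn, htp, htq, hTpq⟩ := exists_neg_pos_of_partialSums_nonpos hT hTn hne
  obtain ⟨i, hi, hci⟩ := exists_mem_Ico_lt_succ_of_lt hpq.le (hstrict p q hpq hqn htp htq)
  have hi := mem_Ico.1 hi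
  have hjump : ∑ i ∈ range (n - 1), (c (i + 1) - c i) * T (i + 1) < 0 := by
    rw [← sum_const_zero (s := range (n - 1))]
    refine sum_lt_sum hterm ⟨i, mem_range.2 (by omega), ?_⟩
    exact mul_neg_of_pos_of_neg (sub_pos.2 hci) (hTpq (i + 1) (by omega) (by omega))
  have : c (n - 1) * T n = 0 := by simp only [T, hTn, mul_zero]
  linarith

end PartialSums

theorem StrictConvexOn.sum_range_lt_of_partialSums_le {f : ℝ → ℝ}
    (hf : StrictConvexOn ℝ Set.univ f) (hanti : Antitone f) {n : ℕ} {x y : ℕ → ℝ}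
    (hx : MonotoneOn x (Set.Iio n)) (hy : MonotoneOn y (Set.Iio n))
    (hpre : ∀ k ≤ n, ∑ i ∈ range k, y i ≤ ∑ i ∈ range k, x i) (hne : ∃ i < n, x i ≠ y i) :
    ∑ i ∈ range n, f (x i) < ∑ i ∈ range n, f (y i) := by
  have hdiff : ∑ i ∈ range n, f (y i) - ∑ i ∈ range n, f (x i) =
      ∑ i ∈ range n, chordSlope f (x i) (y i) * (y i - x i) := by
    simp only [chordSlope_mul_sub, sum_sub_distrib]
  have hpos := sum_range_mul_pos_of_partialSums_nonpos (c := fun i ↦ chordSlope f (x i) (y i))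
    (t := fun i ↦ y i - x i)
    (fun i hi j hj hij ↦ hf.convexOn.chordSlope_mono (hx hi hj hij) (hy hi hj hij))
    (fun i _ ↦ hf.convexOn.chordSlope_neg (hf.strictAnti_of_antitone hanti) _ _)
    (fun k hk ↦ by simpa only [sum_sub_distrib, sub_nonpos] using hpre k hk)
    (fun p q hpq hqn htp htq ↦ hf.chordSlope_lt (sub_neg.1 htp)
      (hx (by simp; omega) (by simpa using hqn) hpq.le) (sub_pos.1 htq))
    (by simpa only [sub_ne_zero, ne_comm] using hne)
  linarith

lemma List.sum_map_eq_sum_range_getD {α M : Type*} [AddCommMonoid M] (l : List α) (d : α)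
    (g : α → M) : (l.map g).sum = ∑ i ∈ Finset.range l.length, g (l.getD i d) := by
  induction l with
  | nil => simp
  | cons a l ih => simp [Finset.sum_range_succ', ih, add_comm]

lemma List.sum_take_eq_sum_range_getD {M : Type*} [AddCommMonoid M] (l : List M) {k : ℕ}
    (hk : k ≤ l.length) : (l.take k).sum = ∑ i ∈ Finset.range k, l.getD i 0 := by
  induction l generalizing k with
  | nil => simp_all
  | cons a l ih =>
    cases k with
    | zero => simp
    | succ k => simp [Finset.sum_range_succ', ih (by simpa using hk), add_comm]

lemma List.Pairwise.monotoneOn_getD {α : Type*} [Preorder α] {l : List α}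
    (h : l.Pairwise (· ≤ ·)) (d : α) : MonotoneOn (fun i ↦ l.getD i d) (Set.Iio l.length) := by
  intro i hi j hj hij
  simp only [List.getD_eq_getElem l d hi, List.getD_eq_getElem l d hj]
  rcases hij.eq_or_lt with rfl | hij
  · rfl
  · exact List.pairwise_iff_getElem.1 h i j hi hj hij

theorem List.eq_of_sum_take_le_of_sum_map_eq {f : ℝ → ℝ} (hf : StrictConvexOn ℝ Set.univ f)
    (hanti : Antitone f) {l₁ l₂ : List ℝ} (h₁ : l₁.Pairwise (· ≤ ·)) (h₂ : l₂.Pairwise (· ≤ ·))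
    (hlen : l₁.length = l₂.length) (htake : ∀ k, (l₂.take k).sum ≤ (l₁.take k).sum)
    (hsum : (l₁.map f).sum = (l₂.map f).sum) : l₁ = l₂ := by
  refine List.ext_getElem hlen fun i hi₁ hi₂ ↦ ?_
  by_contra hne
  have hlt := hf.sum_range_lt_of_partialSums_le hanti (h₁.monotoneOn_getD 0)
    (hlen ▸ h₂.monotoneOn_getD 0)
    (fun k hk ↦ by
      rw [← l₁.sum_take_eq_sum_range_getD hk, ← l₂.sum_take_eq_sum_range_getD (hlen ▸ hk)]
      exact htake k)
    ⟨i, hi₁, by rwa [List.getD_eq_getElem _ _ hi₁, List.getD_eq_getElem _ _ hi₂]⟩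
  rw [← List.sum_map_eq_sum_range_getD, hlen, ← List.sum_map_eq_sum_range_getD, hsum] at hlt
  exact hlt.false

lemma Multiset.sum_map_sort {α M : Type*} [AddCommMonoid M] (s : Multiset α) (r : α → α → Prop)
    [DecidableRel r] [IsTrans α r] [Std.Antisymm r] [Std.Total r] (g : α → M) :
    ((s.sort r).map g).sum = (s.map g).sum := by
  conv_rhs => rw [← s.sort_eq r, Multiset.map_coe, Multiset.sum_coe]

/-- Equality case of the weak Karamata inequality for strictly convex decreasing
functions: equality forces the nondecreasing rearrangements to coincide. -/
theorem weak_karamata_equality {n : ℕ} (f : ℝ → ℝ)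
    (hconv : StrictConvexOn ℝ Set.univ f) (hanti : Antitone f) (A B : Fin n → ℝ)
    (hmaj : WeakMaj (seqMultiset A) (seqMultiset B))
    (heq : ∑ i, f (A i) = ∑ i, f (B i)) :
    (seqMultiset A).sort (· ≤ ·) = (seqMultiset B).sort (· ≤ ·) := by
  have sum_map_sort (C : Fin n → ℝ) :
      (((seqMultiset C).sort (· ≤ ·)).map f).sum = ∑ i, f (C i) := by
    rw [Multiset.sum_map_sort, seqMultiset, Multiset.map_map]; rfl
  refine List.eq_of_sum_take_le_of_sum_map_eq hconv hanti (Multiset.pairwise_sort _ _)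
    (Multiset.pairwise_sort _ _) (by simp [seqMultiset]) hmaj ?_
  rw [sum_map_sort, sum_map_sort, heq]
end

section
/- Let T_1 ≤ T_2 ≤ … ≤ T_m be reals, and define recursively y_1 = min_{1≤k≤m} T_k/k, and for i ≥ 2, y_i = min_{k≥i} (T_k − y_1 − ⋯ − y_{i−1})/(k − i + 1). Then for any sequence A = (a_1,…,a_m) satisfying a_(1)+⋯+a_(i) ≤ T_i for all i (where a_(1) ≤ ⋯ ≤ a_(m) is the nondecreasing rearrangement), the sequence Y = (y_1,…,y_m) weakly majorizes A. -/
/-!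
Write `Y_n = y_1 + ⋯ + y_n` and `A_n = a_(1) + ⋯ + a_(n)`. The recursion says
`Y_{i-1} + (k - i + 1) y_i ≤ T_k` for all `k ≥ i`, with equality for some `k`.

Taking `k` to attain equality for `y_{i+1}` and comparing with the inequality for `y_i` at the
same `k` gives `y_i ≤ y_{i+1}`, so `Y` is already sorted and its sums of smallest entries are
the `Y_n`. It remains to show `A_n ≤ Y_n`, by induction on `n`. If `a_(n+1) ≤ y_{n+1}` this is
immediate. Otherwise take `k` attaining equality for `y_{n+1}`; as the `a_(j)` are sorted,
`A_n + (k - n) a_(n+1) ≤ A_k ≤ T_k = Y_n + (k - n) y_{n+1}`, and since `k - n ≥ 1` and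
`a_(n+1) > y_{n+1}` this forces `A_{n+1} ≤ Y_{n+1}`.
-/

theorem List.sum_take_add_nsmul_le_sum_take {M : Type*} [AddCommMonoid M] [PartialOrder M]
    [IsOrderedAddMonoid M] {l : List M} (hl : l.SortedLE) {c d : ℕ} (hc : c < l.length)
    (hcd : c ≤ d) (hd : d ≤ l.length) :
    (l.take c).sum + (d - c) • l[c] ≤ (l.take d).sum := by
  have hsplit : (l.take d).sum = (l.take c).sum + ((l.drop c).take (d - c)).sum := by
    rw [← List.sum_take_add_sum_drop (l.take d) c, List.take_take, min_eq_left hcd,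
      List.drop_take]
  have hlen : ((l.drop c).take (d - c)).length = d - c := by
    simp only [List.length_take, List.length_drop]
    omega
  have hbound : (d - c) • l[c] ≤ ((l.drop c).take (d - c)).sum := by
    have h := List.card_nsmul_le_sum ((l.drop c).take (d - c)) l[c] fun x hx => ?_
    · rwa [hlen] at h
    obtain ⟨j, hj, rfl⟩ := List.mem_drop_iff_getElem.mp (List.mem_of_mem_take hx)
    exact hl.getElem_le_getElem_of_le (Nat.le_add_right c j)
  rw [hsplit]
  exact add_le_add_right hbound _

section KSmallestSum

variable (M : Multiset ℝ) {n : ℕ}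

theorem kSmallestSum_succ (hn : n < M.card) :
    kSmallestSum M (n + 1) =
      kSmallestSum M n + (M.sort (· ≤ ·))[n]'(by rwa [Multiset.length_sort]) :=
  List.sum_take_succ _ _ _

theorem kSmallestSum_succ_of_card_le (hn : M.card ≤ n) :
    kSmallestSum M (n + 1) = kSmallestSum M n := by
  rw [kSmallestSum, kSmallestSum, List.take_of_length_le, List.take_of_length_le] <;>
    rw [Multiset.length_sort] <;> omega

theorem kSmallestSum_add_nsmul_le {c d : ℕ} (hc : c < M.card) (hcd : c ≤ d)
    (hd : d ≤ M.card) :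
    kSmallestSum M c + (d - c) • (M.sort (· ≤ ·))[c]'(by rwa [Multiset.length_sort]) ≤
      kSmallestSum M d :=
  List.sum_take_add_nsmul_le_sum_take (Multiset.pairwise_sort _ _).sortedLE _ hcd
    (by rwa [Multiset.length_sort])

end KSmallestSum

theorem card_seqMultiset {m : ℕ} (a : Fin m → ℝ) : (seqMultiset a).card = m := by
  simp [seqMultiset]

section PrefixSum

variable {m : ℕ} (y : Fin m → ℝ)

noncomputable def prefixSum (n : ℕ) : ℝ := ((List.ofFn y).take n).sum

theorem sum_filter_lt_eq_prefixSum (i : Fin m) :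
    ∑ j ∈ Finset.univ.filter (fun j : Fin m => j < i), y j = prefixSum y i := by
  rw [prefixSum, List.sum_take_ofFn]
  rfl

theorem prefixSum_succ (i : Fin m) : prefixSum y (i + 1) = prefixSum y i + y i := by
  rw [prefixSum, prefixSum, List.sum_take_succ _ _ (by simp), List.getElem_ofFn]

theorem prefixSum_succ_of_le {n : ℕ} (hn : m ≤ n) : prefixSum y (n + 1) = prefixSum y n := by
  rw [prefixSum, prefixSum, List.take_of_length_le (by simp; omega),
    List.take_of_length_le (by simp; omega)]

theorem kSmallestSum_seqMultiset_of_monotone (hy : Monotone y) (n : ℕ) :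
    kSmallestSum (seqMultiset y) n = prefixSum y n := by
  rw [kSmallestSum, seqMultiset, Fin.univ_val_map, Multiset.coe_sort,
    List.mergeSort_eq_self _ hy.sortedLE_ofFn.pairwise, prefixSum]

end PrefixSum

section Greedy

variable {m : ℕ}

/-- `y` is the sequence `Y(T)` of the greedy recursion (indices shifted to start at `0`). -/
def IsGreedySeq (T y : Fin m → ℝ) : Prop :=
  ∀ i : Fin m, IsLeast
    {v : ℝ | ∃ k : Fin m, i ≤ k ∧
      v = (T k - ∑ j ∈ Finset.univ.filter (fun j : Fin m => j < i), y j) /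
            (((k : ℕ) - (i : ℕ) + 1 : ℕ) : ℝ)} (y i)

namespace IsGreedySeq

variable {T y : Fin m → ℝ} (hy : IsGreedySeq T y)
include hy

theorem prefixSum_add_mul_le {i k : Fin m} (hik : i ≤ k) :
    prefixSum y i + ((k - i + 1 : ℕ) : ℝ) * y i ≤ T k := by
  have hle := (hy i).2 ⟨k, hik, rfl⟩
  rw [sum_filter_lt_eq_prefixSum, le_div_iff₀ (by positivity)] at hle
  linarith

theorem exists_prefixSum_add_mul_eq (i : Fin m) :
    ∃ k, i ≤ k ∧ prefixSum y i + ((k - i + 1 : ℕ) : ℝ) * y i = T k := by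
  obtain ⟨k, hik, hk⟩ := (hy i).1
  refine ⟨k, hik, ?_⟩
  rw [sum_filter_lt_eq_prefixSum, eq_div_iff (by positivity)] at hk
  linarith

theorem monotone : Monotone y := by
  cases m with
  | zero => exact fun i => i.elim0
  | succ m =>
    refine Fin.monotone_iff_le_succ.mpr fun i => ?_
    obtain ⟨k, hik, hk⟩ := hy.exists_prefixSum_add_mul_eq i.succ
    have hle := hy.prefixSum_add_mul_le (Fin.castSucc_lt_succ.le.trans hik)
    have hik' : (i : ℕ) + 1 ≤ k := hik
    have hcount : ((k - i.castSucc + 1 : ℕ) : ℝ) = ((k - i.succ + 1 : ℕ) : ℝ) + 1 := by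
      norm_cast
      simp only [Fin.val_castSucc, Fin.val_succ]
      omega
    have hpos : (0 : ℝ) < ((k - i.succ + 1 : ℕ) : ℝ) := by positivity
    have hsucc : prefixSum y i.succ = prefixSum y i.castSucc + y i.castSucc :=
      prefixSum_succ y i.castSucc
    rw [hsucc] at hk
    rw [hcount] at hle
    nlinarith

variable {M : Multiset ℝ} (hM : M.card = m)
  (hA : ∀ i : Fin m, kSmallestSum M ((i : ℕ) + 1) ≤ T i)
include hM hA

theorem kSmallestSum_succ_le_prefixSum_succ {n : ℕ} (hn : n < m)
    (ih : kSmallestSum M n ≤ prefixSum y n) :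
    kSmallestSum M (n + 1) ≤ prefixSum y (n + 1) := by
  rw [kSmallestSum_succ M (hM ▸ hn), prefixSum_succ y ⟨n, hn⟩]
  have hnL : n < (M.sort (· ≤ ·)).length := by rw [Multiset.length_sort]; omega
  rcases le_or_gt (M.sort (· ≤ ·))[n] (y ⟨n, hn⟩) with hle | hgt
  · exact add_le_add ih hle
  obtain ⟨k, hnk, hk⟩ := hy.exists_prefixSum_add_mul_eq ⟨n, hn⟩
  have hnk' : n ≤ k := hnk
  have hgrow := kSmallestSum_add_nsmul_le M (c := n) (d := k + 1) (by omega) (by omega) (by omega)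
  rw [nsmul_eq_mul, show k + 1 - n = k - n + 1 by omega] at hgrow
  have hcount : (1 : ℝ) ≤ ((k - n + 1 : ℕ) : ℝ) := by exact_mod_cast Nat.le_add_left 1 _
  have hAk := hA k
  nlinarith

theorem kSmallestSum_le_prefixSum (n : ℕ) : kSmallestSum M n ≤ prefixSum y n := by
  induction n with
  | zero => simp [kSmallestSum, prefixSum]
  | succ n ih =>
    rcases lt_or_ge n m with hn | hn
    · exact hy.kSmallestSum_succ_le_prefixSum_succ hM hA hn ih
    · rw [kSmallestSum_succ_of_card_le M (hM ▸ hn), prefixSum_succ_of_le y hn]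
      exact ih

end IsGreedySeq

end Greedy

theorem greedy_seq_weakMaj_general {m : ℕ} (T : Fin m → ℝ)
    (y : Fin m → ℝ)
    (hy : ∀ i : Fin m, IsLeast
      {v : ℝ | ∃ k : Fin m, i ≤ k ∧
        v = (T k - ∑ j ∈ Finset.univ.filter (fun j : Fin m => j < i), y j) /
              (((k : ℕ) - (i : ℕ) + 1 : ℕ) : ℝ)} (y i))
    (A : Fin m → ℝ)
    (hA : ∀ i : Fin m, kSmallestSum (seqMultiset A) ((i : ℕ) + 1) ≤ T i) :
    WeakMaj (seqMultiset y) (seqMultiset A) := by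
  intro n
  rw [kSmallestSum_seqMultiset_of_monotone y (IsGreedySeq.monotone hy)]
  exact IsGreedySeq.kSmallestSum_le_prefixSum hy (card_seqMultiset A) hA n

/-- The sequence Y(T) defined by the greedy recursion
y_i = min_{k ≥ i} (T_k − y_1 − … − y_{i−1})/(k − i + 1)
weakly majorizes every sequence whose sorted partial sums are bounded by the T_i. -/
theorem greedy_seq_weakMaj {m : ℕ} (T : Fin m → ℝ) (hT : Monotone T)
    (y : Fin m → ℝ)
    (hy : ∀ i : Fin m, IsLeast
      {v : ℝ | ∃ k : Fin m, i ≤ k ∧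
        v = (T k - ∑ j ∈ Finset.univ.filter (fun j : Fin m => j < i), y j) /
              (((k : ℕ) - (i : ℕ) + 1 : ℕ) : ℝ)} (y i))
    (A : Fin m → ℝ)
    (hA : ∀ i : Fin m, kSmallestSum (seqMultiset A) ((i : ℕ) + 1) ≤ T i) :
    WeakMaj (seqMultiset y) (seqMultiset A) :=
  greedy_seq_weakMaj_general T y hy A hA
end
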